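/- Let H be a hypergraph with associated simplicial complex ΔH, boundary ∂, and let Φ̄ be the discrete gradient flow of a discrete Morse function on ΔH, with stabilization Φ̄^∞. Then for every n ≥ 0: Φ̄^∞(Inf_n(R(H)_*)) ⊆ Inf_n(Φ̄^∞ R(H)_*) and Φ̄^∞(Sup_n(R(H)_*)) = Sup_n(Φ̄^∞ R(H)_*). Moreover, if Sup_{n−1}(R(H)_*) ⊆ C_{n−1}^{Φ̄}(ΔH;R), then Φ̄^∞(Inf_n(R(H)_*)) = Inf_n(Φ̄^∞ R(H)_*). -/

import Mathlib

/-- A hypergraph: every hyperedge is a nonempty finite set of vertices. -/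
def IsHypergraph {V : Type*} [LinearOrder V] (H : Set (Finset V)) : Prop :=
  ∀ e ∈ H, e.Nonempty

/-- The associated simplicial complex `ΔH`: all nonempty subsets of hyperedges of `H`. -/
def assocSC {V : Type*} [LinearOrder V] (H : Set (Finset V)) : Set (Finset V) :=
  {τ | τ.Nonempty ∧ ∃ σ ∈ H, τ ⊆ σ}

/-- The signed boundary of the basis chain corresponding to a finite set `σ` (with the usual
simplicial signs coming from the linear order on the vertices); vertices map to `0`. -/
noncomputable def bdc {V : Type*} [LinearOrder V] (R : Type*) [CommRing R] (σ : Finset V) :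
    Finset V →₀ R :=
  if σ.card ≤ 1 then 0
  else ∑ v ∈ σ, ((-1 : R) ^ ((σ.filter (fun x => x < v)).card)) •
    Finsupp.single (σ.erase v) (1 : R)

/-- The simplicial boundary operator on the free `R`-module with basis all finite subsets of
`V`. -/
noncomputable def bd {V : Type*} [LinearOrder V] (R : Type*) [CommRing R] :
    (Finset V →₀ R) →ₗ[R] (Finset V →₀ R) :=
  Finsupp.lsum R fun σ => LinearMap.toSpanSingleton R (Finset V →₀ R) (bdc R σ)

/-- `R(H)_n`: the free `R`-module on the `n`-dimensional hyperedges of `H`, as a submodule of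
the chains. -/
noncomputable def RHmod {V : Type*} [LinearOrder V] (R : Type*) [CommRing R] (H : Set (Finset V)) (n : ℕ) :
    Submodule R (Finset V →₀ R) :=
  Submodule.span R {x | ∃ σ ∈ H, σ.card = n + 1 ∧ x = Finsupp.single σ (1 : R)}

/-- The infimum chain complex `Inf_n(R(H)_*) = R(H)_n ⊓ ∂⁻¹(R(H)_{n-1})`. -/
noncomputable def infC {V : Type*} [LinearOrder V] (R : Type*) [CommRing R]
    (H : Set (Finset V)) (n : ℕ) : Submodule R (Finset V →₀ R) :=
  RHmod R H n ⊓ Submodule.comap (bd R) (RHmod R H (n - 1))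

/-- The supremum chain complex `Sup_n(R(H)_*) = R(H)_n + ∂(R(H)_{n+1})`. -/
noncomputable def supC {V : Type*} [LinearOrder V] (R : Type*) [CommRing R]
    (H : Set (Finset V)) (n : ℕ) : Submodule R (Finset V →₀ R) :=
  RHmod R H n ⊔ Submodule.map (bd R) (RHmod R H (n + 1))

/-- The `n`-cycles of the infimum chain complex. -/
noncomputable def cycC {V : Type*} [LinearOrder V] (R : Type*) [CommRing R]
    (H : Set (Finset V)) (n : ℕ) : Submodule R (Finset V →₀ R) :=
  infC R H n ⊓ LinearMap.ker (bd R)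

/-- The `n`-th embedded homology of the hypergraph `H` with coefficients in `R`: the homology
of the infimum chain complex, realized as the image of the `n`-cycles in the quotient of the
chains by the boundaries `∂(Inf_{n+1})`. -/
@[reducible] noncomputable def emH {V : Type*} [LinearOrder V] (R : Type*) [CommRing R]
    (H : Set (Finset V)) (n : ℕ) :=
  ↥(Submodule.map (Submodule.mkQ (Submodule.map (bd R) (infC R H (n + 1)))) (cycC R H n))
/-- A discrete Morse function on a hypergraph `H`. -/
def IsDMF {V : Type*} [LinearOrder V] (H : Set (Finset V)) (f : Finset V → ℝ) : Prop :=
  ∀ α ∈ H,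
    Set.Subsingleton {β : Finset V | β ∈ H ∧ α ⊂ β ∧ β.card = α.card + 1 ∧ f β ≤ f α} ∧
    Set.Subsingleton {γ : Finset V | γ ∈ H ∧ γ ⊂ α ∧ γ.card + 1 = α.card ∧ f α ≤ f γ}

/-- The incidence number `⟨∂β, α⟩` of a codimension-one face `α` of `β` (the simplicial sign
determined by the position of the removed vertex in the ordering of the vertices of `β`). -/
def incid {V : Type*} [LinearOrder V] (b a : Finset V) : ℤ :=
  ∑ v ∈ b \ a, (-1 : ℤ) ^ ((a.filter (fun x => x < v)).card)


/-- `W` realizes, on the chain level, the discrete gradient vector field `grad f` of a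
discrete Morse function `f` on `H`: a hyperedge `α` is sent to `−⟨∂β,α⟩·β` if some cofacet
`β ∈ H` satisfies `f β ≤ f α`, and to `0` otherwise; basis elements outside `H` are sent
to `0`. -/
def RealizesGrad {V : Type*} [LinearOrder V] (R : Type*) [CommRing R] (H : Set (Finset V))
    (f : Finset V → ℝ) (W : (Finset V →₀ R) →ₗ[R] (Finset V →₀ R)) : Prop :=
  (∀ α ∈ H, ∀ β ∈ H, α ⊂ β → β.card = α.card + 1 → f β ≤ f α →
    W (Finsupp.single α (1 : R)) = (-(incid β α)) • Finsupp.single β (1 : R)) ∧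
  (∀ α ∈ H, (¬ ∃ β ∈ H, α ⊂ β ∧ β.card = α.card + 1 ∧ f β ≤ f α) →
    W (Finsupp.single α (1 : R)) = 0) ∧
  (∀ s : Finset V, s ∉ H → W (Finsupp.single s (1 : R)) = 0)

/-- The canonical projection `π(H,H') : R(H)_* → R(H')_*`, sending a hyperedge of `H'` to
itself and every other basis element to zero. -/
noncomputable def projS {V : Type*} [LinearOrder V] (R : Type*) [CommRing R]
    (S : Set (Finset V)) : (Finset V →₀ R) →ₗ[R] (Finset V →₀ R) :=
  open Classical in
  Finsupp.lsum R fun s =>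
    if s ∈ S then LinearMap.toSpanSingleton R (Finset V →₀ R) (Finsupp.single s (1 : R))
    else 0

section CommutingOperators

variable {R M : Type*} [CommRing R] [AddCommGroup M] [Module R M]

theorem map_inf_comap_le_of_commute {φ d : Module.End R M} (h : Commute φ d)
    (A B : Submodule R M) :
    (A ⊓ B.comap d).map φ ≤ A.map φ ⊓ (B.map φ).comap d := by
  rintro _ ⟨x, ⟨hxA, hdxB⟩, rfl⟩
  refine ⟨⟨x, hxA, rfl⟩, ⟨d x, hdxB, ?_⟩⟩
  exact LinearMap.congr_fun h.eq x

theorem map_sup_map_eq_of_commute {φ d : Module.End R M} (h : Commute φ d)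
    (A B : Submodule R M) :
    (A ⊔ B.map d).map φ = A.map φ ⊔ (B.map φ).map d := by
  rw [Submodule.map_sup, ← Submodule.map_comp, ← Submodule.map_comp]
  exact congrArg (A.map φ ⊔ B.map ·) h.eq

/-- Equality holds once `φ` fixes both `d A` and `B`: then `d (φ x) = φ w` with `w ∈ B`
forces `d x = φ (d x) = φ w = w`. -/
theorem map_inf_comap_eq_of_commute {φ d : Module.End R M} (h : Commute φ d)
    (A B : Submodule R M) (hfix : A.map d ⊔ B ≤ LinearMap.ker (φ - LinearMap.id)) :
    (A ⊓ B.comap d).map φ = A.map φ ⊓ (B.map φ).comap d := by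
  have fixed : ∀ y ∈ A.map d ⊔ B, φ y = y := fun y hy =>
    sub_eq_zero.mp (hfix hy)
  refine le_antisymm (map_inf_comap_le_of_commute h A B) ?_
  rintro _ ⟨⟨x, hxA, rfl⟩, ⟨w, hwB, hw⟩⟩
  have hdx : d x = w := calc
    d x = φ (d x) := (fixed _ (Submodule.mem_sup_left ⟨x, hxA, rfl⟩)).symm
    _ = d (φ x) := LinearMap.congr_fun h.eq x
    _ = φ w := hw.symm
    _ = w := fixed w (Submodule.mem_sup_right hwB)
  exact ⟨x, ⟨hxA, show d x ∈ B from hdx ▸ hwB⟩, rfl⟩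

theorem ker_sub_id_le_ker_pow_sub_id (φ : Module.End R M) (N : ℕ) :
    LinearMap.ker (φ - LinearMap.id) ≤ LinearMap.ker (φ ^ N - LinearMap.id) := by
  intro x hx
  have hφx : φ x = x := sub_eq_zero.mp hx
  rw [LinearMap.mem_ker, LinearMap.sub_apply, Module.End.pow_apply,
    Function.IsFixedPt.iterate hφx N, LinearMap.id_apply, sub_self]

end CommutingOperators

section HypergraphChains

variable {V : Type*} [LinearOrder V] (R : Type*) [CommRing R]

theorem bd_single (σ : Finset V) : bd R (Finsupp.single σ (1 : R)) = bdc R σ := by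
  simp [bd, LinearMap.toSpanSingleton_apply]

theorem map_bd_RHmod_zero (H : Set (Finset V)) : (RHmod R H 0).map (bd R) = ⊥ := by
  rw [RHmod, Submodule.map_span, Submodule.span_eq_bot]
  rintro _ ⟨_, ⟨σ, -, hcard, rfl⟩, rfl⟩
  rw [bd_single, bdc, if_pos hcard.le]

theorem map_bd_RHmod_le_supC (H : Set (Finset V)) (n : ℕ) :
    (RHmod R H n).map (bd R) ≤ supC R H (n - 1) := by
  cases n with
  | zero => simp [map_bd_RHmod_zero]
  | succ m => exact le_sup_right

end HypergraphChains

theorem gradient_flow_inf_sup_general {V : Type*} [LinearOrder V] (R : Type*) [CommRing R]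
    (H : Set (Finset V))
    (Phi : (Finset V →₀ R) →ₗ[R] (Finset V →₀ R))
    (hcomm : Phi ∘ₗ bd R = bd R ∘ₗ Phi)
    (N : ℕ) :
    ∀ n : ℕ,
      (Submodule.map (Phi ^ N) (infC R H n) ≤
        Submodule.map (Phi ^ N) (RHmod R H n) ⊓
          Submodule.comap (bd R) (Submodule.map (Phi ^ N) (RHmod R H (n - 1)))) ∧
      (Submodule.map (Phi ^ N) (supC R H n) =
        Submodule.map (Phi ^ N) (RHmod R H n) ⊔
          Submodule.map (bd R) (Submodule.map (Phi ^ N) (RHmod R H (n + 1)))) ∧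
      (supC R H (n - 1) ≤ LinearMap.ker (Phi - LinearMap.id) →
        Submodule.map (Phi ^ N) (infC R H n) =
          Submodule.map (Phi ^ N) (RHmod R H n) ⊓
            Submodule.comap (bd R) (Submodule.map (Phi ^ N) (RHmod R H (n - 1)))) := by
  have hcommN : Commute (Phi ^ N) (bd R) := Commute.pow_left (show Commute Phi (bd R) from hcomm) N
  intro n
  refine ⟨map_inf_comap_le_of_commute hcommN _ _, map_sup_map_eq_of_commute hcommN _ _,
    fun hsup => map_inf_comap_eq_of_commute hcommN _ _ ?_⟩
  calc (RHmod R H n).map (bd R) ⊔ RHmod R H (n - 1) ≤ supC R H (n - 1) :=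
        sup_le (map_bd_RHmod_le_supC R H n) le_sup_left
    _ ≤ LinearMap.ker (Phi - LinearMap.id) := hsup
    _ ≤ LinearMap.ker (Phi ^ N - LinearMap.id) := ker_sub_id_le_ker_pow_sub_id Phi N

/-- Let `Φ̄ = Id + ∂V̄ + V̄∂` be the discrete gradient flow of a discrete Morse function
`f̄` on `ΔH`, stabilizing as `Φ̄^∞ = Φ̄^N`.  Then for every `n`:
`Φ̄^∞(Inf_n(R(H)_*)) ⊆ Inf_n(Φ̄^∞ R(H)_*)` and
`Φ̄^∞(Sup_n(R(H)_*)) = Sup_n(Φ̄^∞ R(H)_*)`; moreover, if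
`Sup_{n−1}(R(H)_*) ⊆ C_{n−1}^{Φ̄}(ΔH;R)` (the `Φ̄`-invariant chains), then
`Φ̄^∞(Inf_n(R(H)_*)) = Inf_n(Φ̄^∞ R(H)_*)`. -/
theorem gradient_flow_inf_sup {V : Type*} [LinearOrder V] (R : Type*) [CommRing R]
    (H : Set (Finset V)) (hH : IsHypergraph H) (f : Finset V → ℝ)
    (hf : IsDMF (assocSC H) f)
    (W : (Finset V →₀ R) →ₗ[R] (Finset V →₀ R)) (hW : RealizesGrad R (assocSC H) f W)
    (Phi : (Finset V →₀ R) →ₗ[R] (Finset V →₀ R))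
    (hPhi : Phi = LinearMap.id + bd R ∘ₗ W + W ∘ₗ bd R)
    (hcomm : Phi ∘ₗ bd R = bd R ∘ₗ Phi)
    (N : ℕ) (hstab : Phi ^ (N + 1) = Phi ^ N) :
    ∀ n : ℕ,
      (Submodule.map (Phi ^ N) (infC R H n) ≤
        Submodule.map (Phi ^ N) (RHmod R H n) ⊓
          Submodule.comap (bd R) (Submodule.map (Phi ^ N) (RHmod R H (n - 1)))) ∧
      (Submodule.map (Phi ^ N) (supC R H n) =
        Submodule.map (Phi ^ N) (RHmod R H n) ⊔
          Submodule.map (bd R) (Submodule.map (Phi ^ N) (RHmod R H (n + 1)))) ∧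
      (supC R H (n - 1) ≤ LinearMap.ker (Phi - LinearMap.id) →
        Submodule.map (Phi ^ N) (infC R H n) =
          Submodule.map (Phi ^ N) (RHmod R H n) ⊓
            Submodule.comap (bd R) (Submodule.map (Phi ^ N) (RHmod R H (n - 1)))) :=
  gradient_flow_inf_sup_general R H Phi hcomm N
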